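/- Let ρ and σ be n×n positive semidefinite complex matrices with trace 1, and let Π be an n×n complex matrix that is Hermitian and idempotent (Πᴴ = Π and Π² = Π) and satisfies Π·ρ = ρ. Then F(ρ, σ)² ≤ tr(Π·σ). -/

import Mathlib

/-! Since `Π √ρ = √ρ`, `F(ρ, σ) = ‖√σ √ρ‖₁ = ‖(√σ Π) √ρ‖₁`, and Hölder's inequality
`‖X Y‖₁ ≤ ‖X‖₂ ‖Y‖₂` bounds this by `√tr(Π σ Π) · √tr ρ = √tr(Π σ)`. -/

open Matrix BigOperators
open scoped ComplexOrder

/-- The positive semidefinite square root of a matrix (zero if the matrix is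
not positive semidefinite). -/
noncomputable def msqrt {n : Type*} [Fintype n] [DecidableEq n]
    (A : Matrix n n ℂ) : Matrix n n ℂ :=
  letI := Classical.dec A.PosSemidef
  if h : A.PosSemidef then
    (h.1.eigenvectorUnitary : Matrix n n ℂ) * diagonal ((↑) ∘ (√·) ∘ h.1.eigenvalues) *
      (star h.1.eigenvectorUnitary : Matrix n n ℂ)
  else 0

/-- The fidelity `F(ρ,σ) = tr √(√ρ σ √ρ)` of two (positive semidefinite) matrices. -/
noncomputable def fidelity {n : Type*} [Fintype n] [DecidableEq n]
    (ρ σ : Matrix n n ℂ) : ℝ :=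
  ((msqrt (msqrt ρ * σ * msqrt ρ)).trace).re

/-- The hiding state `ρ_f` of a function `f : X → Y`:
`(ρ_f)_{x,x'} = 1/|X|` if `f x = f x'` and `0` otherwise. -/
noncomputable def hidingState {X Y : Type*} [Fintype X] [DecidableEq Y]
    (f : X → Y) : Matrix X X ℂ :=
  Matrix.of fun x x' => if f x = f x' then (1 : ℂ) / (Fintype.card X) else 0

namespace Matrix

variable {n 𝕜 : Type*} [Fintype n] [DecidableEq n] [RCLike 𝕜]

lemma continuousOn_spectrum_real (f : ℝ → ℝ) (A : Matrix n n 𝕜) :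
    ContinuousOn f (spectrum ℝ A) :=
  A.finite_real_spectrum.continuousOn f

lemma cfc_mul_real (f g : ℝ → ℝ) (A : Matrix n n 𝕜) :
    cfc (fun x => f x * g x) A = cfc f A * cfc g A :=
  cfc_mul f g A (continuousOn_spectrum_real f A) (continuousOn_spectrum_real g A)

lemma isHermitian_cfc (f : ℝ → ℝ) (A : Matrix n n 𝕜) : (cfc f A).IsHermitian :=
  cfc_predicate (R := ℝ) (A := Matrix n n 𝕜) (p := IsSelfAdjoint) f A

lemma cfc_mul_self_of_mul_self {f : ℝ → ℝ} (hf : ∀ x, f x * f x = f x) (A : Matrix n n 𝕜) :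
    cfc f A * cfc f A = cfc f A := by
  rw [← cfc_mul_real]
  simp only [hf]

lemma cfc_sqrt_mul_self {A : Matrix n n 𝕜} (hA : A.PosSemidef) :
    cfc Real.sqrt A * cfc Real.sqrt A = A := by
  conv_rhs => rw [← cfc_id ℝ A hA.isHermitian.isSelfAdjoint]
  rw [← cfc_mul_real]
  refine cfc_congr (R := ℝ) fun x hx => ?_
  rw [hA.isHermitian.spectrum_real_eq_range_eigenvalues] at hx
  obtain ⟨i, rfl⟩ := hx
  exact Real.mul_self_sqrt (hA.eigenvalues_nonneg i)

/-- Since `√x = 0` for `x ≤ 0`, `x * (√x)⁻¹ = √x` holds for every real `x`: no positivity is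
needed, and `cfc (fun x => (√x)⁻¹) A` inverts `√A` on its support. -/
lemma cfc_sqrt_eq_mul_cfc_inv_sqrt {A : Matrix n n 𝕜} (hA : A.IsHermitian) :
    cfc Real.sqrt A = A * cfc (fun x => (√x)⁻¹) A := by
  have h := cfc_mul_real id (fun x => (√x)⁻¹) A
  rw [cfc_id ℝ A hA.isSelfAdjoint] at h
  rw [← h]
  congr 1
  funext x
  simp [← div_eq_mul_inv, Real.div_sqrt]

lemma norm_trace_conjTranspose_mul_sq_le (X Y : Matrix n n 𝕜) :
    ‖(Xᴴ * Y).trace‖ ^ 2 ≤ RCLike.re (Xᴴ * X).trace * RCLike.re (Yᴴ * Y).trace := by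
  let := toMatrixSeminormedAddCommGroup (1 : Matrix n n 𝕜) PosSemidef.one
  let := toMatrixInnerProductSpace (1 : Matrix n n 𝕜) PosSemidef.one
  have h := inner_mul_inner_self_le (𝕜 := 𝕜) Yᴴ Xᴴ
  rw [norm_inner_symm Xᴴ Yᴴ, ← sq] at h
  change ‖(Xᴴ * 1 * Yᴴᴴ).trace‖ ^ 2 ≤
    RCLike.re (Yᴴ * 1 * Yᴴᴴ).trace * RCLike.re (Xᴴ * 1 * Xᴴᴴ).trace at h
  simp only [mul_one, conjTranspose_conjTranspose] at h
  rwa [mul_comm] at h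

lemma trace_conjTranspose_mul_mul_le {Q : Matrix n n 𝕜} (hQ : Q.IsHermitian) (hQQ : Q * Q = Q)
    (X : Matrix n n 𝕜) : (Xᴴ * Q * X).trace ≤ (Xᴴ * X).trace := by
  have h1Q : (1 - Q).PosSemidef := by
    have : (1 - Q)ᴴ * (1 - Q) = 1 - Q := by
      simp [hQ.eq, sub_mul, mul_sub, hQQ]
    exact this ▸ posSemidef_conjTranspose_mul_self _
  have := (h1Q.conjTranspose_mul_mul_same X).trace_nonneg
  rwa [mul_sub, sub_mul, trace_sub, mul_one, sub_nonneg] at this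

noncomputable def traceNorm (B : Matrix n n 𝕜) : ℝ :=
  RCLike.re (cfc Real.sqrt (Bᴴ * B)).trace

/-- Hölder's inequality `‖X Y‖₁ ≤ ‖X‖₂ ‖Y‖₂`. Writing `M = (X Y)ᴴ (X Y)` and `L = M^{-1/2}` (on the
support of `M`), `tr √M = tr (Xᴴ · X Y L Yᴴ)`; Cauchy–Schwarz for the Frobenius inner product
applies, and `L M L` is the support projection of `M`. -/
theorem traceNorm_mul_sq_le (X Y : Matrix n n 𝕜) :
    traceNorm (X * Y) ^ 2 ≤ RCLike.re (Xᴴ * X).trace * RCLike.re (Yᴴ * Y).trace := by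
  set M := (X * Y)ᴴ * (X * Y)
  have hM : M.IsHermitian := isHermitian_conjTranspose_mul_self _
  set L := cfc (fun x => (√x)⁻¹) M
  have hL : L.IsHermitian := isHermitian_cfc _ _
  set Z := X * Y * L * Yᴴ
  have htr : (cfc Real.sqrt M).trace = (Xᴴ * Z).trace := by
    rw [cfc_sqrt_eq_mul_cfc_inv_sqrt hM]
    change ((X * Y)ᴴ * (X * Y) * L).trace = _
    simp only [Z, conjTranspose_mul, Matrix.mul_assoc]
    rw [trace_mul_comm Yᴴ]
    simp only [Matrix.mul_assoc]
  have hLML : L * M * L = cfc (fun x => (√x)⁻¹ * √x) M := by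
    rw [Matrix.mul_assoc, ← cfc_sqrt_eq_mul_cfc_inv_sqrt hM, ← cfc_mul_real]
  have hZZ : Zᴴ * Z = Yᴴᴴ * (L * M * L) * Yᴴ := by
    simp only [Z, M, conjTranspose_mul, conjTranspose_conjTranspose, hL.eq, Matrix.mul_assoc]
  have hZ : (Zᴴ * Z).trace ≤ (Yᴴ * Y).trace := by
    have hproj := cfc_mul_self_of_mul_self (f := fun x => (√x)⁻¹ * √x)
      (fun x => by by_cases hx : √x = 0 <;> simp [hx]) M
    rw [hZZ, hLML]
    refine (trace_conjTranspose_mul_mul_le (isHermitian_cfc _ _) hproj Yᴴ).trans_eq ?_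
    rw [conjTranspose_conjTranspose, trace_mul_comm]
  have hX : 0 ≤ RCLike.re (Xᴴ * X).trace :=
    (RCLike.nonneg_iff.mp (posSemidef_conjTranspose_mul_self X).trace_nonneg).1
  calc traceNorm (X * Y) ^ 2 ≤ ‖(Xᴴ * Z).trace‖ ^ 2 := by
        rw [traceNorm, htr, ← sq_abs]
        exact pow_le_pow_left₀ (abs_nonneg _) (RCLike.abs_re_le_norm _) 2
    _ ≤ RCLike.re (Xᴴ * X).trace * RCLike.re (Zᴴ * Z).trace :=
        norm_trace_conjTranspose_mul_sq_le X Z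
    _ ≤ RCLike.re (Xᴴ * X).trace * RCLike.re (Yᴴ * Y).trace :=
        mul_le_mul_of_nonneg_left (RCLike.le_iff_re_im.mp hZ).1 hX

end Matrix

section Fidelity

variable {n : Type*} [Fintype n] [DecidableEq n]

lemma msqrt_eq_cfc {A : Matrix n n ℂ} (hA : A.PosSemidef) : msqrt A = cfc Real.sqrt A := by
  rw [msqrt, dif_pos hA, hA.isHermitian.cfc_eq, IsHermitian.cfc, Unitary.conjStarAlgAut_apply]
  rfl

lemma isHermitian_msqrt {A : Matrix n n ℂ} (hA : A.PosSemidef) : (msqrt A).IsHermitian :=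
  msqrt_eq_cfc hA ▸ isHermitian_cfc _ _

lemma msqrt_mul_self {A : Matrix n n ℂ} (hA : A.PosSemidef) : msqrt A * msqrt A = A :=
  msqrt_eq_cfc hA ▸ cfc_sqrt_mul_self hA

lemma mul_msqrt_of_mul_eq {A P : Matrix n n ℂ} (hA : A.PosSemidef) (hPA : P * A = A) :
    P * msqrt A = msqrt A := by
  rw [msqrt_eq_cfc hA, cfc_sqrt_eq_mul_cfc_inv_sqrt hA.isHermitian, ← Matrix.mul_assoc, hPA]

lemma fidelity_eq_traceNorm {ρ σ : Matrix n n ℂ} (hρ : ρ.PosSemidef) (hσ : σ.PosSemidef) :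
    fidelity ρ σ = traceNorm (msqrt σ * msqrt ρ) := by
  have hM : (msqrt ρ * σ * msqrt ρ).PosSemidef := by
    simpa only [(isHermitian_msqrt hρ).eq] using hσ.conjTranspose_mul_mul_same (msqrt ρ)
  rw [fidelity, traceNorm, msqrt_eq_cfc hM, conjTranspose_mul, (isHermitian_msqrt hρ).eq,
    (isHermitian_msqrt hσ).eq, ← Matrix.mul_assoc, Matrix.mul_assoc (msqrt ρ) (msqrt σ),
    msqrt_mul_self hσ]
  rfl

end Fidelity

theorem stmt_4_general {n : Type*} [Fintype n] [DecidableEq n] (ρ σ P : Matrix n n ℂ)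
    (hρ : ρ.PosSemidef) (hσ : σ.PosSemidef) (hρtr : ρ.trace = 1)
    (hP : P.IsHermitian) (hPidem : P * P = P) (hPρ : P * ρ = ρ) :
    (fidelity ρ σ) ^ 2 ≤ ((P * σ).trace).re := by
  have hF : fidelity ρ σ = traceNorm (msqrt σ * P * msqrt ρ) := by
    rw [fidelity_eq_traceNorm hρ hσ, Matrix.mul_assoc, mul_msqrt_of_mul_eq hρ hPρ]
  have hX : ((msqrt σ * P)ᴴ * (msqrt σ * P)).trace = (P * σ).trace := by
    rw [conjTranspose_mul, hP.eq, (isHermitian_msqrt hσ).eq, Matrix.mul_assoc,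
      ← Matrix.mul_assoc (msqrt σ), msqrt_mul_self hσ, trace_mul_comm, Matrix.mul_assoc, hPidem,
      trace_mul_comm]
  have hY : ((msqrt ρ)ᴴ * msqrt ρ).trace = 1 := by
    rw [(isHermitian_msqrt hρ).eq, msqrt_mul_self hρ, hρtr]
  calc fidelity ρ σ ^ 2 = traceNorm (msqrt σ * P * msqrt ρ) ^ 2 := by rw [hF]
    _ ≤ ((msqrt σ * P)ᴴ * (msqrt σ * P)).trace.re * ((msqrt ρ)ᴴ * msqrt ρ).trace.re :=
        traceNorm_mul_sq_le _ _
    _ = (P * σ).trace.re := by rw [hX, hY, Complex.one_re, mul_one]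

/-- If `ρ, σ` are PSD with trace 1 and `P` is a Hermitian idempotent with
`Pρ = ρ`, then `F(ρ,σ)² ≤ tr(Pσ)`. -/
theorem stmt_4 {n : Type*} [Fintype n] [DecidableEq n] (ρ σ P : Matrix n n ℂ)
    (hρ : ρ.PosSemidef) (hσ : σ.PosSemidef) (hρtr : ρ.trace = 1) (hσtr : σ.trace = 1)
    (hP : P.IsHermitian) (hPidem : P * P = P) (hPρ : P * ρ = ρ) :
    (fidelity ρ σ) ^ 2 ≤ ((P * σ).trace).re :=
  stmt_4_general ρ σ P hρ hσ hρtr hP hPidem hPρ
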